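/- Let p, q : ℝⁿ → (0,∞) and s : ℝⁿ → ℝ be log-Hölder continuous with 0 < p⁻ ≤ p⁺ < ∞, 0 < q⁻ ≤ q⁺ < ∞. Assume p, q, s are independent of the n-th coordinate for |x_n| ≤ 2. For ν ∈ ℕ₀ and m' ∈ ℤ^{n−1}, let Q̃_{ν,m'} = Q_{ν,m'} × [2^{−ν}, 2^{−ν+1}) ⊂ ℝⁿ. Then for every λ > 0 and every family of complex coefficients (λ_{ν,(m',0)}): ∑_{ν∈ℕ₀} ‖ (2^{ν(s̃(·)−1/p̃(·))} ∑_{m'} λ_{ν,(m',0)} χ_{ν,m'} / λ)^{q̃(·)} ‖_{L^{p̃(·)/q̃(·)}(ℝ^{n−1})} equals ∑_{ν∈ℕ₀} ‖ (2^{νs(·)} ∑_{m'} λ_{ν,(m',0)} χ_{Q̃_{ν,m'}} / λ)^{q(·)} ‖_{L^{p(·)/q(·)}(ℝⁿ)}, where p̃(x') = p(x',0), q̃(x') = q(x',0), s̃(x') = s(x',0). Consequently the ℓ^{q̃(·)}(L^{p̃(·)})-norm over ℝ^{n−1} of the level-(ν) weighted indicator sums equals the ℓ^{q(·)}(L^{p(·)})-norm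 over ℝⁿ of the corresponding sums with indicators of the boxes Q̃_{ν,m'}. -/

import Mathlib

open MeasureTheory

/-- Luxemburg quasi-norm for real-valued functions on a measure space. -/
noncomputable def luxNormR {X : Type*} [MeasureSpace X] (p : X → ℝ) (f : X → ℝ) : ℝ :=
  sInf {l : ℝ | 0 < l ∧ (∫ x : X, (|f x| / l) ^ (p x)) ≤ 1}

/-- Membership in the dyadic cube `Q_{ν,m'} ⊆ ℝ^{n−1}`. -/
def QcMem {k : ℕ} (ν : ℕ) (m' : Fin k → ℤ) (x' : EuclideanSpace ℝ (Fin k)) : Prop :=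
  ∀ i, (2 : ℝ) ^ (-(ν : ℤ)) * (m' i : ℝ) ≤ x' i ∧
    x' i < (2 : ℝ) ^ (-(ν : ℤ)) * ((m' i : ℝ) + 1)

/-- `∑_{m'} λ_{ν,(m',0)} χ_{ν,m'}(x')`. -/
noncomputable def indicSum {k : ℕ} (lamc : ℕ → (Fin k → ℤ) → ℂ) (ν : ℕ)
    (x' : EuclideanSpace ℝ (Fin k)) : ℂ :=
  ∑' m' : Fin k → ℤ, Set.indicator {y | QcMem ν m' y} (fun _ => lamc ν m') x'

/-- `∑_{m'} λ_{ν,(m',0)} χ_{Q̃_{ν,m'}}(x)`, with `Q̃_{ν,m'} = Q_{ν,m'} × [2^{−ν}, 2^{−ν+1})`. -/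
noncomputable def indicSumBox {k : ℕ} (lamc : ℕ → (Fin k → ℤ) → ℂ) (ν : ℕ)
    (x : EuclideanSpace ℝ (Fin k) × ℝ) : ℂ :=
  ∑' m' : Fin k → ℤ, Set.indicator
    {y : EuclideanSpace ℝ (Fin k) × ℝ | QcMem ν m' y.1 ∧
      y.2 ∈ Set.Ico ((2 : ℝ) ^ (-(ν : ℤ))) ((2 : ℝ) ^ (-(ν : ℤ) + 1))}
    (fun _ => lamc ν m') x

/-!
The box sum at `(x', t)` is the cube sum at `x'` when `t` lies in the layer
`[2^{-ν}, 2^{-ν+1})` and vanishes otherwise. On that layer `p, q, s` do not see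
`t`, hence the `ℝⁿ`-integrand is the `ℝ^{n-1}`-integrand with weight `2^{νs̃}` times the indicator
of the layer, and integrating out `t` produces the factor `2^{-ν}`. Since
`(2^{-ν/p̃} u)^{p̃} = 2^{-ν} u^{p̃}`, this is exactly the effect of the extra weight `2^{-ν/p̃}`.
-/

open Set

def dyadicLayer (ν : ℕ) : Set ℝ := Ico ((2 : ℝ) ^ (-(ν : ℤ))) (2 ^ (-(ν : ℤ) + 1))

lemma abs_le_two_of_mem_dyadicLayer (ν : ℕ) {t : ℝ}
    (ht : t ∈ dyadicLayer ν) : |t| ≤ 2 := by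
  have hpos : (0 : ℝ) < (2 : ℝ) ^ (-(ν : ℤ)) := by positivity
  have hle : (2 : ℝ) ^ (-(ν : ℤ) + 1) ≤ 2 ^ (1 : ℤ) :=
    zpow_le_zpow_right₀ one_le_two (by omega)
  rw [abs_of_pos (hpos.trans_le ht.1)]
  exact (ht.2.trans_le hle).le.trans (by norm_num)

lemma integral_indicator_one_dyadicLayer (ν : ℕ) :
    ∫ t, (dyadicLayer ν).indicator (1 : ℝ → ℝ) t = (2 : ℝ) ^ (-(ν : ℤ)) := by
  have hle : (2 : ℝ) ^ (-(ν : ℤ)) ≤ 2 ^ (-(ν : ℤ) + 1) := zpow_le_zpow_right₀ one_le_two (by omega)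
  rw [dyadicLayer, integral_indicator_one measurableSet_Ico, Real.volume_real_Ico_of_le hle,
    zpow_add_one₀ two_ne_zero]
  ring

lemma indicSumBox_eq_indicator {k : ℕ} (lamc : ℕ → (Fin k → ℤ) → ℂ) (ν : ℕ)
    (x : EuclideanSpace ℝ (Fin k) × ℝ) :
    indicSumBox lamc ν x = (dyadicLayer ν).indicator (fun _ => indicSum lamc ν x.1) x.2 := by
  classical
  unfold indicSumBox indicSum dyadicLayer
  by_cases ht : x.2 ∈ Ico ((2 : ℝ) ^ (-(ν : ℤ))) (2 ^ (-(ν : ℤ) + 1))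
  · rw [indicator_of_mem ht]
    exact tsum_congr fun m' => by simp only [indicator_apply, mem_ofPred_eq, ht, and_true]
  · rw [indicator_of_notMem ht]
    exact (tsum_congr fun m' => indicator_of_notMem (fun h => ht h.2) _).trans tsum_zero

lemma mul_rpow_div_rpow_div {b u l : ℝ} (hb : 0 ≤ b) (hu : 0 ≤ u) (hl : 0 ≤ l) (p : ℝ)
    {q : ℝ} (hq : q ≠ 0) :
    ((b * u) ^ q / l) ^ (p / q) = b ^ p * (u ^ q / l) ^ (p / q) := by
  rw [Real.mul_rpow hb hu, mul_div_assoc,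
    Real.mul_rpow (Real.rpow_nonneg hb q) (div_nonneg (Real.rpow_nonneg hu q) hl),
    ← Real.rpow_mul hb, mul_div_cancel₀ p hq]

lemma modular_integrand_weight_shift (ν : ℕ) {a lam l p q s : ℝ} (ha : 0 ≤ a)
    (hlam : 0 < lam) (hl : 0 ≤ l) (hp : 0 < p) (hq : 0 < q) :
    (|((2 : ℝ) ^ ((ν : ℝ) * (s - 1 / p)) * a / lam) ^ q| / l) ^ (p / q) =
      2 ^ (-(ν : ℤ)) * (|((2 : ℝ) ^ ((ν : ℝ) * s) * a / lam) ^ q| / l) ^ (p / q) := by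
  have hu : 0 ≤ (2 : ℝ) ^ ((ν : ℝ) * s) * a / lam := by positivity
  have hweight : (2 : ℝ) ^ ((ν : ℝ) * (s - 1 / p)) * a / lam =
      2 ^ (-(ν : ℝ) / p) * ((2 : ℝ) ^ ((ν : ℝ) * s) * a / lam) := by
    rw [mul_div_assoc, mul_div_assoc, ← mul_assoc, ← Real.rpow_add two_pos]
    ring_nf
  have hpow : ((2 : ℝ) ^ (-(ν : ℝ) / p)) ^ p = 2 ^ (-(ν : ℤ)) := by
    rw [← Real.rpow_mul zero_le_two, div_mul_cancel₀ _ hp.ne']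
    norm_cast
  rw [abs_of_nonneg (Real.rpow_nonneg (by positivity) q), abs_of_nonneg (Real.rpow_nonneg hu q),
    hweight, mul_rpow_div_rpow_div (by positivity) hu hl p hq.ne', hpow]

lemma integral_modular_indicSum_eq_indicSumBox {k : ℕ}
    (p q s : EuclideanSpace ℝ (Fin k) × ℝ → ℝ)
    (hppos : ∀ x, 0 < p x) (hqpos : ∀ x, 0 < q x)
    (hindep : ∀ (x' : EuclideanSpace ℝ (Fin k)) (t : ℝ), |t| ≤ 2 →
      p (x', t) = p (x', 0) ∧ q (x', t) = q (x', 0) ∧ s (x', t) = s (x', 0))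
    (lamc : ℕ → (Fin k → ℤ) → ℂ) (ν : ℕ) {lam l : ℝ} (hlam : 0 < lam) (hl : 0 ≤ l) :
    ∫ x' : EuclideanSpace ℝ (Fin k),
      (|((2 : ℝ) ^ ((ν : ℝ) * (s (x', 0) - 1 / p (x', 0))) *
          ‖indicSum lamc ν x'‖ / lam) ^ q (x', 0)| / l) ^ (p (x', 0) / q (x', 0)) =
    ∫ x : EuclideanSpace ℝ (Fin k) × ℝ,
      (|((2 : ℝ) ^ ((ν : ℝ) * s x) * ‖indicSumBox lamc ν x‖ / lam) ^ q x| / l) ^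
        (p x / q x) := by
  set F : EuclideanSpace ℝ (Fin k) → ℝ := fun x' =>
    (|((2 : ℝ) ^ ((ν : ℝ) * s (x', 0)) * ‖indicSum lamc ν x'‖ / lam) ^ q (x', 0)| / l) ^
      (p (x', 0) / q (x', 0))
  have hbox : (fun x : EuclideanSpace ℝ (Fin k) × ℝ =>
      (|((2 : ℝ) ^ ((ν : ℝ) * s x) * ‖indicSumBox lamc ν x‖ / lam) ^ q x| / l) ^
        (p x / q x)) = fun x => F x.1 * (dyadicLayer ν).indicator 1 x.2 := by
    funext ⟨x', t⟩
    rw [indicSumBox_eq_indicator]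
    by_cases ht : t ∈ dyadicLayer ν
    · obtain ⟨hp, hq, hs⟩ := hindep x' t (abs_le_two_of_mem_dyadicLayer ν ht)
      simp only [indicator_of_mem ht, hp, hq, hs, Pi.one_apply, mul_one, F]
    · simp only [indicator_of_notMem ht, norm_zero, mul_zero, zero_div,
        Real.zero_rpow (hqpos _).ne', abs_zero, Real.zero_rpow (div_pos (hppos _) (hqpos _)).ne']
  calc _ = ∫ x', 2 ^ (-(ν : ℤ)) * F x' :=
        integral_congr_ae <| .of_forall fun x' =>
          modular_integrand_weight_shift ν (norm_nonneg _) hlam hl (hppos _) (hqpos _)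
    _ = (∫ x', F x') * ∫ t, (dyadicLayer ν).indicator 1 t := by
        rw [integral_const_mul, integral_indicator_one_dyadicLayer, mul_comm]
    -- `integral_prod_mul` needs no integrability: otherwise both sides are the junk value `0`.
    _ = _ := by
        rw [hbox, Measure.volume_eq_prod, integral_prod_mul]

lemma luxNormR_congr {X Y : Type*} [MeasureSpace X] [MeasureSpace Y] {p : X → ℝ} {p' : Y → ℝ}
    {f : X → ℝ} {g : Y → ℝ}
    (h : ∀ l, 0 < l → ∫ x, (|f x| / l) ^ p x = ∫ y, (|g y| / l) ^ p' y) :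
    luxNormR p f = luxNormR p' g := by
  unfold luxNormR
  congr 1
  ext l
  exact and_congr_right fun hl => by rw [h l hl]

lemma tsum_luxNormR_indicSum_eq_indicSumBox {k : ℕ}
    (p q s : EuclideanSpace ℝ (Fin k) × ℝ → ℝ)
    (hppos : ∀ x, 0 < p x) (hqpos : ∀ x, 0 < q x)
    (hindep : ∀ (x' : EuclideanSpace ℝ (Fin k)) (t : ℝ), |t| ≤ 2 →
      p (x', t) = p (x', 0) ∧ q (x', t) = q (x', 0) ∧ s (x', t) = s (x', 0))
    (lamc : ℕ → (Fin k → ℤ) → ℂ) {lam : ℝ} (hlam : 0 < lam) :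
    ∑' ν : ℕ, luxNormR (fun x' => p (x', 0) / q (x', 0))
      (fun x' => ((2 : ℝ) ^ ((ν : ℝ) * (s (x', 0) - 1 / p (x', 0))) *
        ‖indicSum lamc ν x'‖ / lam) ^ q (x', 0)) =
    ∑' ν : ℕ, luxNormR (fun x => p x / q x)
      (fun x => ((2 : ℝ) ^ ((ν : ℝ) * s x) * ‖indicSumBox lamc ν x‖ / lam) ^ q x) :=
  tsum_congr fun ν => luxNormR_congr fun _ hl =>
    integral_modular_indicSum_eq_indicSumBox p q s hppos hqpos hindep lamc ν hlam hl.le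

theorem trace_modular_identity_general {k : ℕ}
    (p q : EuclideanSpace ℝ (Fin k) × ℝ → ℝ)
    (s : EuclideanSpace ℝ (Fin k) × ℝ → ℝ)
    (hppos : ∀ x, 0 < p x) (hqpos : ∀ x, 0 < q x)
    (hindep : ∀ (x' : EuclideanSpace ℝ (Fin k)) (t : ℝ), |t| ≤ 2 →
      p (x', t) = p (x', 0) ∧ q (x', t) = q (x', 0) ∧ s (x', t) = s (x', 0))
    (lamc : ℕ → (Fin k → ℤ) → ℂ) :
    (∀ lam : ℝ, 0 < lam →
      (∑' ν : ℕ, luxNormR (fun x' => p (x', 0) / q (x', 0))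
        (fun x' => ((2 : ℝ) ^ ((ν : ℝ) * (s (x', 0) - 1 / p (x', 0))) *
          ‖indicSum lamc ν x'‖ / lam) ^ (q (x', 0)))) =
      (∑' ν : ℕ, luxNormR (fun x => p x / q x)
        (fun x => ((2 : ℝ) ^ ((ν : ℝ) * s x) *
          ‖indicSumBox lamc ν x‖ / lam) ^ (q x)))) ∧
    sInf {lam : ℝ | 0 < lam ∧
      (∑' ν : ℕ, luxNormR (fun x' => p (x', 0) / q (x', 0))
        (fun x' => ((2 : ℝ) ^ ((ν : ℝ) * (s (x', 0) - 1 / p (x', 0))) *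
          ‖indicSum lamc ν x'‖ / lam) ^ (q (x', 0)))) ≤ 1} =
    sInf {lam : ℝ | 0 < lam ∧
      (∑' ν : ℕ, luxNormR (fun x => p x / q x)
        (fun x => ((2 : ℝ) ^ ((ν : ℝ) * s x) *
          ‖indicSumBox lamc ν x‖ / lam) ^ (q x))) ≤ 1} := by
  have modular_eq := fun lam (hlam : 0 < lam) =>
    tsum_luxNormR_indicSum_eq_indicSumBox p q s hppos hqpos hindep lamc hlam
  refine ⟨modular_eq, ?_⟩
  congr 1
  ext lam
  exact and_congr_right fun hlam => by rw [modular_eq lam hlam]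

/-- Modular identity for the trace theorem: if `p, q, s` are log-Hölder continuous, with
`0 < p⁻ ≤ p⁺ < ∞`, `0 < q⁻ ≤ q⁺ < ∞`, and independent of the last coordinate for
`|x_n| ≤ 2`, then for every `λ > 0` the `ℓ^{q̃(·)}(L^{p̃(·)})`-modular over `ℝ^{n−1}` of the
weighted indicator sums (with weight `2^{ν(s̃−1/p̃)}`) equals the `ℓ^{q(·)}(L^{p(·)})`-modular
over `ℝⁿ` of the corresponding sums over the boxes `Q̃_{ν,m'}`; consequently the two
Luxemburg-type sequence norms agree. -/
theorem trace_modular_identity {k : ℕ}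
    (p q : EuclideanSpace ℝ (Fin k) × ℝ → ℝ)
    (s : EuclideanSpace ℝ (Fin k) × ℝ → ℝ)
    (hp : Measurable p) (hq : Measurable q) (hs : Measurable s)
    (hppos : ∀ x, 0 < p x) (hqpos : ∀ x, 0 < q x)
    (hpsup : ∃ C : ℝ, ∀ x, p x ≤ C) (hqsup : ∃ C : ℝ, ∀ x, q x ≤ C)
    (hpC : ∃ C : ℝ, 0 < C ∧ ∀ x y, x ≠ y →
      |p x - p y| ≤ C / Real.log (Real.exp 1 + ‖x - y‖⁻¹))
    (hqC : ∃ C : ℝ, 0 < C ∧ ∀ x y, x ≠ y →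
      |q x - q y| ≤ C / Real.log (Real.exp 1 + ‖x - y‖⁻¹))
    (hsC : ∃ C : ℝ, 0 < C ∧ ∀ x y, x ≠ y →
      |s x - s y| ≤ C / Real.log (Real.exp 1 + ‖x - y‖⁻¹))
    (hindep : ∀ (x' : EuclideanSpace ℝ (Fin k)) (t : ℝ), |t| ≤ 2 →
      p (x', t) = p (x', 0) ∧ q (x', t) = q (x', 0) ∧ s (x', t) = s (x', 0))
    (lamc : ℕ → (Fin k → ℤ) → ℂ) :
    (∀ lam : ℝ, 0 < lam →
      (∑' ν : ℕ, luxNormR (fun x' => p (x', 0) / q (x', 0))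
        (fun x' => ((2 : ℝ) ^ ((ν : ℝ) * (s (x', 0) - 1 / p (x', 0))) *
          ‖indicSum lamc ν x'‖ / lam) ^ (q (x', 0)))) =
      (∑' ν : ℕ, luxNormR (fun x => p x / q x)
        (fun x => ((2 : ℝ) ^ ((ν : ℝ) * s x) *
          ‖indicSumBox lamc ν x‖ / lam) ^ (q x)))) ∧
    sInf {lam : ℝ | 0 < lam ∧
      (∑' ν : ℕ, luxNormR (fun x' => p (x', 0) / q (x', 0))
        (fun x' => ((2 : ℝ) ^ ((ν : ℝ) * (s (x', 0) - 1 / p (x', 0))) *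
          ‖indicSum lamc ν x'‖ / lam) ^ (q (x', 0)))) ≤ 1} =
    sInf {lam : ℝ | 0 < lam ∧
      (∑' ν : ℕ, luxNormR (fun x => p x / q x)
        (fun x => ((2 : ℝ) ^ ((ν : ℝ) * s x) *
          ‖indicSumBox lamc ν x‖ / lam) ^ (q x))) ≤ 1} :=
  trace_modular_identity_general p q s hppos hqpos hindep lamc
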